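/- (Second moment of the isotropic ES estimator.) The one-sample antithetic ES gradient estimator satisfies |E_{g~N(0,I_d)}[‖z_ES(g)‖²] − (d+2)·‖∇F(θ)‖²| ≤ 30·τ·σ²·L·d³ + 105·τ²·σ⁴·d⁴. -/

import Mathlib

open MeasureTheory ProbabilityTheory
open scoped RealInnerProductSpace

/-- The standard Gaussian measure `N(0, I_n)` on `ℝ^n`. -/
noncomputable def stdGaussian (n : ℕ) : Measure (EuclideanSpace ℝ (Fin n)) :=
  (Measure.pi (fun _ => gaussianReal 0 1)).map (MeasurableEquiv.toLp 2 (Fin n → ℝ))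

/-!
Write `v g` for the antithetic difference quotient and `a = ∇F θ`. Both `v g` and `⟪g, a⟫` are
bounded by `L ‖g‖` and differ by at most `τ σ² ‖g‖³`, so `|v g ^ 2 - ⟪g, a⟫ ^ 2| ≤ 2 L τ σ² ‖g‖⁴`.
Integrating against `‖g‖²`, the second moment is therefore within `2 L τ σ² E‖g‖⁶ ≤ 30 L τ σ² d³`
of `E[⟪g, a⟫² ‖g‖²] = (d + 2) ‖a‖²`. Since `N(0, I_d)` is a product measure, both Gaussian moments
reduce to the one-dimensional moments `E X² = 1`, `E X⁴ = 3`, `E X⁶ = 15` and `E X = E X³ = 0`,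
which follow from the integration by parts identity `E X ^ (m + 2) = (m + 1) E X ^ m`.
-/

section GaussianReal

open Real

lemma gaussianPDFReal_zero_one :
    gaussianPDFReal 0 1 = fun x => (√(2 * π))⁻¹ * exp (-x ^ 2 / 2) := by
  ext x; simp [gaussianPDFReal]

lemma hasDerivAt_gaussianPDFReal_zero_one (x : ℝ) :
    HasDerivAt (gaussianPDFReal 0 1) (-x * gaussianPDFReal 0 1 x) x := by
  rw [gaussianPDFReal_zero_one]
  exact (((hasDerivAt_pow 2 x).neg.div_const 2).exp.const_mul _).congr_deriv (by simp; ring)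

lemma integrable_gaussianPDFReal_zero_one_mul_pow (k : ℕ) :
    Integrable (fun x => gaussianPDFReal 0 1 x * x ^ k) := by
  refine ((integrable_rpow_mul_exp_neg_mul_sq (b := 1 / 2) (by norm_num) (s := k)
    (by linarith [k.cast_nonneg (α := ℝ)])).const_mul (√(2 * π))⁻¹).congr
    (ae_of_all _ fun x => ?_)
  simp only [gaussianPDFReal_zero_one, Real.rpow_natCast]
  ring_nf

lemma integral_pow_add_two_gaussianReal (m : ℕ) :
    ∫ x, x ^ (m + 2) ∂gaussianReal 0 1 = (m + 1) * ∫ x, x ^ m ∂gaussianReal 0 1 := by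
  simp only [integral_gaussianReal_eq_integral_smul one_ne_zero, smul_eq_mul]
  have hint := integrable_gaussianPDFReal_zero_one_mul_pow
  have hparts := integral_mul_deriv_eq_deriv_mul_of_integrable
    (u := fun x => x ^ (m + 1)) (u' := fun x => (m + 1) * x ^ m)
    (v := gaussianPDFReal 0 1) (v' := fun x => -x * gaussianPDFReal 0 1 x)
    (fun x _ => by simpa using hasDerivAt_pow (m + 1) x)
    (fun x _ => hasDerivAt_gaussianPDFReal_zero_one x)
    ((hint (m + 2)).neg.congr (ae_of_all _ fun x => by simp; ring))
    (((hint m).const_mul (m + 1)).congr (ae_of_all _ fun x => by simp; ring))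
    ((hint (m + 1)).congr (ae_of_all _ fun x => by simp; ring))
  simp only [mul_neg, neg_mul, integral_neg, neg_inj] at hparts
  calc ∫ x, gaussianPDFReal 0 1 x * x ^ (m + 2)
      = ∫ x, x ^ (m + 1) * (x * gaussianPDFReal 0 1 x) := by congr 1; ext x; ring
    _ = ∫ x, (m + 1) * x ^ m * gaussianPDFReal 0 1 x := hparts
    _ = (m + 1) * ∫ x, gaussianPDFReal 0 1 x * x ^ m := by
        rw [← integral_const_mul]; congr 1; ext x; ring

lemma integral_sq_gaussianReal : ∫ x, x ^ 2 ∂gaussianReal 0 1 = 1 := by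
  simpa using integral_pow_add_two_gaussianReal 0

lemma integral_pow_three_gaussianReal : ∫ x, x ^ 3 ∂gaussianReal 0 1 = 0 := by
  simpa [integral_id_gaussianReal] using integral_pow_add_two_gaussianReal 1

lemma integral_pow_four_gaussianReal : ∫ x, x ^ 4 ∂gaussianReal 0 1 = 3 := by
  rw [integral_pow_add_two_gaussianReal 2, integral_sq_gaussianReal]; norm_num

lemma integral_pow_six_gaussianReal : ∫ x, x ^ 6 ∂gaussianReal 0 1 = 15 := by
  rw [integral_pow_add_two_gaussianReal 4, integral_pow_four_gaussianReal]; norm_num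

end GaussianReal

lemma abs_sq_sub_sq_le {u w M ε : ℝ} (hu : |u| ≤ M) (hw : |w| ≤ M) (h : |u - w| ≤ ε) :
    |u ^ 2 - w ^ 2| ≤ 2 * M * ε := by
  rw [sq_sub_sq, abs_mul]
  calc |u + w| * |u - w| ≤ (M + M) * ε :=
        mul_le_mul ((abs_add_le u w).trans (add_le_add hu hw)) h (abs_nonneg _)
          (by linarith [abs_nonneg u])
    _ = 2 * M * ε := by ring

section StdGaussian

variable {d : ℕ}

lemma stdGaussian_eq :
    stdGaussian d = ProbabilityTheory.stdGaussian (EuclideanSpace ℝ (Fin d)) :=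
  map_pi_eq_stdGaussian

instance : IsGaussian (stdGaussian d) := by
  rw [stdGaussian_eq]; infer_instance

lemma integrable_norm_pow_stdGaussian (n : ℕ) :
    Integrable (fun g => ‖g‖ ^ n) (stdGaussian d) :=
  (IsGaussian.memLp_id _ n (by simp)).integrable_norm_pow'

lemma integral_monomial_stdGaussian (e : Fin d → ℕ) :
    ∫ g, ∏ l, g l ^ e l ∂stdGaussian d = ∏ l, ∫ x, x ^ e l ∂gaussianReal 0 1 := by
  rw [_root_.stdGaussian, integral_map_equiv]
  exact integral_fintype_prod_eq_prod (fun l x => x ^ e l)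

lemma prod_pow_piSingle (x : Fin d → ℝ) (i : Fin d) (n : ℕ) :
    ∏ l, x l ^ (Pi.single i n : Fin d → ℕ) l = x i ^ n := by
  rw [Fintype.prod_eq_single i fun l hl => by simp [hl]]
  simp

lemma integral_pow_stdGaussian (i : Fin d) (n : ℕ) :
    ∫ g, g i ^ n ∂stdGaussian d = ∫ x, x ^ n ∂gaussianReal 0 1 := by
  have h := integral_monomial_stdGaussian (Pi.single i n)
  simp only [prod_pow_piSingle] at h
  rwa [Fintype.prod_eq_single i fun l hl => by simp [hl], Pi.single_eq_same] at h

lemma integral_mul_mul_sq_stdGaussian (i j k : Fin d) :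
    ∫ g, g i * g j * g k ^ 2 ∂stdGaussian d =
      if i = j then (if i = k then 3 else 1) else 0 := by
  have hmono (g : EuclideanSpace ℝ (Fin d)) : g i * g j * g k ^ 2 =
      ∏ l, g l ^ (Pi.single i 1 + Pi.single j 1 + Pi.single k 2 : Fin d → ℕ) l := by
    simp only [Pi.add_apply, pow_add, Finset.prod_mul_distrib, prod_pow_piSingle, pow_one]
  simp_rw [hmono, integral_monomial_stdGaussian, Pi.add_apply]
  by_cases hij : i = j
  · subst hij
    by_cases hik : i = k
    · subst hik
      rw [Fintype.prod_eq_single i fun l hl => by simp [hl]]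
      simp [integral_pow_four_gaussianReal]
    · refine (Finset.prod_eq_one fun l _ => ?_).trans (by simp [hik])
      by_cases hli : l = i
      · subst hli; simp [Ne.symm hik, integral_sq_gaussianReal]
      by_cases hlk : l = k
      · subst hlk; simp [hli, integral_sq_gaussianReal]
      · simp [hli, hlk]
  · refine (Finset.prod_eq_zero (Finset.mem_univ i) ?_).trans (by simp [hij])
    by_cases hik : i = k
    · subst hik; simp [Ne.symm hij, integral_pow_three_gaussianReal]
    · simp [Ne.symm hij, Ne.symm hik, integral_id_gaussianReal]

lemma integrable_mul_mul_sq_stdGaussian (i j k : Fin d) :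
    Integrable (fun g => g i * g j * g k ^ 2) (stdGaussian d) := by
  refine (integrable_norm_pow_stdGaussian 4).mono' (by fun_prop) (ae_of_all _ fun g => ?_)
  have hle (l : Fin d) : |g l| ≤ ‖g‖ := PiLp.norm_apply_le g l
  rw [Real.norm_eq_abs, abs_mul, abs_mul, abs_pow]
  calc |g i| * |g j| * |g k| ^ 2 ≤ ‖g‖ * ‖g‖ * ‖g‖ ^ 2 := by gcongr <;> exact hle _
    _ = ‖g‖ ^ 4 := by ring

lemma inner_sq_mul_norm_sq_eq_sum (g a : EuclideanSpace ℝ (Fin d)) :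
    ⟪g, a⟫ ^ 2 * ‖g‖ ^ 2 = ∑ i, ∑ j, ∑ k, a i * a j * (g i * g j * g k ^ 2) := by
  have hk (i j : Fin d) :
      ∑ k, a i * a j * (g i * g j * g k ^ 2) = a i * g i * (a j * g j) * ∑ k, g k ^ 2 := by
    rw [Finset.mul_sum]; exact Finset.sum_congr rfl fun k _ => by ring
  simp_rw [hk, ← Finset.sum_mul, ← Finset.sum_mul_sum, ← sq, EuclideanSpace.real_norm_sq_eq,
    PiLp.inner_apply, RCLike.inner_apply, conj_trivial]

lemma integral_inner_sq_mul_norm_sq_stdGaussian (a : EuclideanSpace ℝ (Fin d)) :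
    ∫ g, ⟪g, a⟫ ^ 2 * ‖g‖ ^ 2 ∂stdGaussian d = (d + 2) * ‖a‖ ^ 2 := by
  have hint (i j k : Fin d) := (integrable_mul_mul_sq_stdGaussian i j k).const_mul (a i * a j)
  simp_rw [inner_sq_mul_norm_sq_eq_sum]
  rw [integral_finsetSum _ fun i _ => integrable_finsetSum _ fun j _ =>
    integrable_finsetSum _ fun k _ => hint i j k]
  simp_rw [integral_finsetSum _ fun j _ => integrable_finsetSum _ fun k _ => hint _ j k,
    integral_finsetSum _ fun k _ => hint _ _ k, integral_const_mul,
    integral_mul_mul_sq_stdGaussian]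
  simp only [mul_ite, mul_zero, EuclideanSpace.real_norm_sq_eq, Finset.mul_sum]
  refine Finset.sum_congr rfl fun i _ => ?_
  have hsplit (k : Fin d) : (if i = k then a i * a i * 3 else a i * a i) =
      a i ^ 2 + if i = k then 2 * a i ^ 2 else 0 := by
    split_ifs <;> ring
  simp [hsplit, Finset.sum_add_distrib]
  ring

lemma norm_pow_six_le (g : EuclideanSpace ℝ (Fin d)) : ‖g‖ ^ 6 ≤ d ^ 2 * ∑ i, g i ^ 6 := by
  have h := pow_sum_le_card_mul_sum_pow (s := Finset.univ) (f := fun i => g i ^ 2)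
    (fun i _ => sq_nonneg _) 2
  simp only [Finset.card_univ, Fintype.card_fin, ← pow_mul] at h
  rwa [show 6 = 2 * (2 + 1) from rfl, pow_mul, EuclideanSpace.real_norm_sq_eq]

lemma integral_norm_pow_six_stdGaussian_le :
    ∫ g, ‖g‖ ^ 6 ∂stdGaussian d ≤ 15 * d ^ 3 := by
  have hint (i : Fin d) : Integrable (fun g => g i ^ 6) (stdGaussian d) :=
    (integrable_norm_pow_stdGaussian 6).mono' (by fun_prop) (ae_of_all _ fun g => by
      simpa [abs_pow] using pow_le_pow_left₀ (abs_nonneg _) (PiLp.norm_apply_le g i) 6)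
  calc ∫ g, ‖g‖ ^ 6 ∂stdGaussian d
      ≤ ∫ g, d ^ 2 * ∑ i, g i ^ 6 ∂stdGaussian d :=
        integral_mono (integrable_norm_pow_stdGaussian 6)
          ((integrable_finsetSum _ fun i _ => hint i).const_mul _) norm_pow_six_le
    _ = 15 * d ^ 3 := by
        rw [integral_const_mul, integral_finsetSum _ fun i _ => hint i]
        simp [integral_pow_stdGaussian, integral_pow_six_gaussianReal]
        ring

lemma integrable_sq_mul_norm_sq_stdGaussian {f : EuclideanSpace ℝ (Fin d) → ℝ}
    (hf : Continuous f) {L : ℝ} (hfL : ∀ g, |f g| ≤ L * ‖g‖) :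
    Integrable (fun g => f g ^ 2 * ‖g‖ ^ 2) (stdGaussian d) := by
  refine ((integrable_norm_pow_stdGaussian 4).const_mul (L ^ 2)).mono' (by fun_prop)
    (ae_of_all _ fun g => ?_)
  rw [Real.norm_eq_abs, abs_of_nonneg (by positivity), ← sq_abs (f g)]
  calc |f g| ^ 2 * ‖g‖ ^ 2 ≤ (L * ‖g‖) ^ 2 * ‖g‖ ^ 2 := by
        gcongr; exact hfL g
    _ = L ^ 2 * ‖g‖ ^ 4 := by ring

lemma abs_integral_sq_mul_norm_sq_sub_le {f h : EuclideanSpace ℝ (Fin d) → ℝ} {L ε : ℝ}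
    (hL : 0 ≤ L) (hε : 0 ≤ ε) (hf : Continuous f) (hh : Continuous h)
    (hfL : ∀ g, |f g| ≤ L * ‖g‖) (hhL : ∀ g, |h g| ≤ L * ‖g‖)
    (hfh : ∀ g, |f g - h g| ≤ ε * ‖g‖ ^ 3) :
    |∫ g, f g ^ 2 * ‖g‖ ^ 2 ∂stdGaussian d - ∫ g, h g ^ 2 * ‖g‖ ^ 2 ∂stdGaussian d|
      ≤ 30 * L * ε * d ^ 3 := by
  have hpoint (g : EuclideanSpace ℝ (Fin d)) :
      ‖f g ^ 2 * ‖g‖ ^ 2 - h g ^ 2 * ‖g‖ ^ 2‖ ≤ 2 * L * ε * ‖g‖ ^ 6 := by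
    rw [Real.norm_eq_abs, ← sub_mul, abs_mul, abs_of_nonneg (by positivity : (0 : ℝ) ≤ ‖g‖ ^ 2)]
    calc |f g ^ 2 - h g ^ 2| * ‖g‖ ^ 2 ≤ 2 * (L * ‖g‖) * (ε * ‖g‖ ^ 3) * ‖g‖ ^ 2 := by
          gcongr; exact abs_sq_sub_sq_le (hfL g) (hhL g) (hfh g)
      _ = 2 * L * ε * ‖g‖ ^ 6 := by ring
  calc |∫ g, f g ^ 2 * ‖g‖ ^ 2 ∂stdGaussian d - ∫ g, h g ^ 2 * ‖g‖ ^ 2 ∂stdGaussian d|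
      = ‖∫ g, (f g ^ 2 * ‖g‖ ^ 2 - h g ^ 2 * ‖g‖ ^ 2) ∂stdGaussian d‖ := by
        rw [integral_sub (integrable_sq_mul_norm_sq_stdGaussian hf hfL)
          (integrable_sq_mul_norm_sq_stdGaussian hh hhL), Real.norm_eq_abs]
    _ ≤ ∫ g, 2 * L * ε * ‖g‖ ^ 6 ∂stdGaussian d :=
        norm_integral_le_of_norm_le ((integrable_norm_pow_stdGaussian 6).const_mul _)
          (ae_of_all _ hpoint)
    _ ≤ 2 * L * ε * (15 * d ^ 3) := by
        rw [integral_const_mul]; gcongr; exact integral_norm_pow_six_stdGaussian_le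
    _ = 30 * L * ε * d ^ 3 := by ring

end StdGaussian

section Lipschitz

variable {E : Type*} [NormedAddCommGroup E] {F : E → ℝ} {L : ℝ}

lemma abs_centralDifference_le [NormedSpace ℝ E] (hL : 0 ≤ L)
    (hlip : ∀ x y, |F x - F y| ≤ L * ‖x - y‖) (x g : E) (σ : ℝ) :
    |(F (x + σ • g) - F (x - σ • g)) / (2 * σ)| ≤ L * ‖g‖ := by
  rw [abs_div]
  refine div_le_of_le_mul₀ (abs_nonneg _) (by positivity) ?_
  calc |F (x + σ • g) - F (x - σ • g)| ≤ L * ‖(2 * σ) • g‖ := by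
        convert hlip (x + σ • g) (x - σ • g) using 3; module
    _ = L * ‖g‖ * |2 * σ| := by rw [norm_smul, Real.norm_eq_abs]; ring

lemma norm_gradient_le [InnerProductSpace ℝ E] [CompleteSpace E] (hL : 0 ≤ L)
    (hlip : ∀ x y, |F x - F y| ≤ L * ‖x - y‖) (x : E) : ‖gradient F x‖ ≤ L := by
  rw [gradient, LinearIsometryEquiv.norm_map]
  exact norm_fderiv_le_of_lip' ℝ hL (Filter.Eventually.of_forall fun y => hlip y x)

end Lipschitz

theorem second_moment_isotropic_ES_general
    (d : ℕ) (L τ σ : ℝ) (hL : 0 < L) (hτ : 0 < τ)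
    (F : EuclideanSpace ℝ (Fin d) → ℝ)
    (hlip : ∀ x y : EuclideanSpace ℝ (Fin d), |F x - F y| ≤ L * ‖x - y‖)
    (happrox : ∀ x g : EuclideanSpace ℝ (Fin d),
      |(F (x + σ • g) - F (x - σ • g)) / (2 * σ) - ⟪g, gradient F x⟫| ≤ τ * σ ^ 2 * ‖g‖ ^ 3)
    (θ : EuclideanSpace ℝ (Fin d))
    :
    |(∫ g, ‖((F (θ + σ • g) - F (θ - σ • g)) / (2 * σ)) • g‖ ^ 2 ∂(stdGaussian d)) - ((d : ℝ) + 2) * ‖gradient F θ‖ ^ 2|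
      ≤ 30 * τ * σ ^ 2 * L * (d : ℝ) ^ 3 + 105 * τ ^ 2 * σ ^ 4 * (d : ℝ) ^ 4 := by
  set a := gradient F θ
  set v := fun g => (F (θ + σ • g) - F (θ - σ • g)) / (2 * σ)
  have hF : Continuous F := LipschitzWith.continuous (K := L.toNNReal) <|
    .of_dist_le_mul fun x y => by simpa [dist_eq_norm, Real.dist_eq, hL.le] using hlip x y
  have hv (g : EuclideanSpace ℝ (Fin d)) : |v g| ≤ L * ‖g‖ :=
    abs_centralDifference_le hL.le hlip θ g σ
  have ha (g : EuclideanSpace ℝ (Fin d)) : |⟪g, a⟫| ≤ L * ‖g‖ :=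
    (abs_real_inner_le_norm g a).trans <| by
      rw [mul_comm]; gcongr; exact norm_gradient_le hL.le hlip θ
  have hclose := abs_integral_sq_mul_norm_sq_sub_le hL.le (by positivity) (by fun_prop)
    (by fun_prop) hv ha (happrox θ)
  rw [integral_inner_sq_mul_norm_sq_stdGaussian] at hclose
  simp_rw [norm_smul, mul_pow, Real.norm_eq_abs, sq_abs]
  refine hclose.trans ?_
  linarith [show 0 ≤ 105 * τ ^ 2 * σ ^ 4 * (d : ℝ) ^ 4 by positivity]

/-- Second moment of the isotropic ES estimator. -/
theorem second_moment_isotropic_ES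
    (d : ℕ) (hd : 1 ≤ d) (L τ σ : ℝ) (hL : 0 < L) (hτ : 0 < τ) (hσ : 0 < σ)
    (F : EuclideanSpace ℝ (Fin d) → ℝ)
    (hdiff : Differentiable ℝ F)
    (hlip : ∀ x y : EuclideanSpace ℝ (Fin d), |F x - F y| ≤ L * ‖x - y‖)
    (happrox : ∀ x g : EuclideanSpace ℝ (Fin d),
      |(F (x + σ • g) - F (x - σ • g)) / (2 * σ) - ⟪g, gradient F x⟫| ≤ τ * σ ^ 2 * ‖g‖ ^ 3)
    (θ : EuclideanSpace ℝ (Fin d))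
    :
    |(∫ g, ‖((F (θ + σ • g) - F (θ - σ • g)) / (2 * σ)) • g‖ ^ 2 ∂(stdGaussian d)) - ((d : ℝ) + 2) * ‖gradient F θ‖ ^ 2|
      ≤ 30 * τ * σ ^ 2 * L * (d : ℝ) ^ 3 + 105 * τ ^ 2 * σ ^ 4 * (d : ℝ) ^ 4 :=
  second_moment_isotropic_ES_general d L τ σ hL hτ F hlip happrox θ
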